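/- arXiv:2209.00969 — 3 statements merged into one kernel-verified Lean document; each statement's English description precedes it below -/
import Mathlib

section
/- For c+d ∈ (0,1) and nonnegative integer T, the quantity p_T = Σ_{s=0}^∞ C(s+T,s)² (1-c-d)^{2s} (c+d)^{2(T+1)} satisfies 0 < p_T < 1. -/
/-!
Put `x = 1 - c - d` and `y = c + d = 1 - x`. The terms `a s = C(s+T,T) x^s y^(T+1)` are the
negative binomial probabilities, so they are nonnegative and sum to `1`, and `p_T = ∑ a s ^ 2`.
Since `0 ≤ a s ≤ 1` we have `a s ^ 2 ≤ a s`, strictly at `s = 0` where `0 < a 0 = y^(T+1) < 1`.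
-/

lemma hasSum_negativeBinomial {𝕜 : Type*} [NormedDivisionRing 𝕜] [HasSummableGeomSeries 𝕜]
    (k : ℕ) {r : 𝕜} (hr : ‖r‖ < 1) :
    HasSum (fun n ↦ ((n + k).choose k : 𝕜) * r ^ n * (1 - r) ^ (k + 1)) 1 := by
  have hr1 : (1 - r) ^ (k + 1) ≠ 0 :=
    pow_ne_zero _ (sub_ne_zero.mpr fun h ↦ by simp [← h] at hr)
  simpa [hr1] using (hasSum_choose_mul_geometric_of_norm_lt_one k hr).mul_right ((1 - r) ^ (k + 1))

lemma tsum_sq_mem_Ioo_of_hasSum_one {ι : Type*} {a : ι → ℝ} (ha : ∀ i, 0 ≤ a i)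
    (hsum : HasSum a 1) {i : ι} (hi0 : 0 < a i) (hi1 : a i < 1) :
    ∑' j, a j ^ 2 ∈ Set.Ioo 0 1 := by
  have hle_one : ∀ j, a j ≤ 1 := fun j ↦ le_hasSum hsum j fun k _ ↦ ha k
  have hsq_le : ∀ j, a j ^ 2 ≤ a j := fun j ↦ by nlinarith [ha j, hle_one j]
  have hsq : Summable fun j ↦ a j ^ 2 :=
    .of_nonneg_of_le (fun j ↦ sq_nonneg _) hsq_le hsum.summable
  exact ⟨hsq.tsum_pos (fun j ↦ sq_nonneg _) i (by positivity),
    hasSum_lt hsq_le (by nlinarith) hsq.hasSum hsum⟩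

/-- For c+d ∈ (0,1) and T ∈ ℕ, p_T = Σ_s C(s+T,s)² (1-c-d)^{2s} (c+d)^{2(T+1)}
satisfies 0 < p_T < 1. -/
theorem stmt8 (c d : ℝ) (hc : 0 < c) (hd : 0 < d) (hcd : c + d < 1) (T : ℕ) :
    0 < (∑' s : ℕ, (((s + T).choose s : ℝ)) ^ 2 * (1 - c - d) ^ (2 * s)
          * (c + d) ^ (2 * (T + 1))) ∧
    (∑' s : ℕ, (((s + T).choose s : ℝ)) ^ 2 * (1 - c - d) ^ (2 * s)
          * (c + d) ^ (2 * (T + 1))) < 1 := by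
  set a : ℕ → ℝ := fun s ↦ ((s + T).choose T : ℝ) * (1 - c - d) ^ s * (c + d) ^ (T + 1)
  have hsum : HasSum a 1 := by
    have hx : ‖1 - c - d‖ < 1 := by rw [Real.norm_eq_abs, abs_lt]; constructor <;> linarith
    have hy : 1 - (1 - c - d) = c + d := by ring
    simpa only [hy] using hasSum_negativeBinomial T hx
  have hterm : ∀ s : ℕ, ((s + T).choose s : ℝ) ^ 2 * (1 - c - d) ^ (2 * s)
      * (c + d) ^ (2 * (T + 1)) = a s ^ 2 := fun s ↦ by
    simp only [a, Nat.choose_symm_add]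
    ring
  have hx0 : 0 ≤ 1 - c - d := by linarith
  simp_rw [hterm]
  exact tsum_sq_mem_Ioo_of_hasSum_one (fun s ↦ by positivity) hsum (i := 0)
    (by simp [a]; positivity)
    (by simpa [a] using pow_lt_one₀ (by positivity) hcd T.succ_ne_zero)
end

section
/- Let R satisfy the distributional fixed-point equation R =_d Σ_{i=1}^{N} C_i R_i + d Z, where the R_i are i.i.d. copies of R with values in [-1,1], independent of (N, Z, C_1,...,C_N), Σ_{i=1}^N C_i = c almost surely with N ≥ 1, c + d = 1, d > 0, and Z ∈ [-1,1] with Z independent of the R_i. Then E[R] = E[Z] and, setting ρ₂ = E[Σ_{i=1}^N C_i²] < 1 and assuming Z is independent of (N, C_1,...,C_N), Var(R) = d² Var(Z)/(1-ρ₂). -/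
/-!
Conditioning on `(N, Z, C)`, which is independent of the sequence `(R i)`, reduces the moments of
`∑_{i<N} C_i R_i + d Z` to those of a sum with deterministic weights `a_i`, where pairwise
independence gives `E[∑ a_i R_i] = (∑ a_i) m` and
`E[(∑ a_i R_i)²] = (∑ a_i²) q + ((∑ a_i)² - ∑ a_i²) m²` with `m = E[R]`, `q = E[R²]`.
As `∑ C_i = c` surely, matching the first two moments of both sides of the fixed-point equation
gives `m = c m + d E[Z]` and `q = ρ₂ q + (c² - ρ₂) m² + 2 d c m E[Z] + d² E[Z²]`, which solve to
`m = E[Z]` and `(1 - ρ₂) (q - m²) = d² (E[Z²] - E[Z]²)`.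
-/

open MeasureTheory ProbabilityTheory Finset

theorem Measurable.sum_range {X : Type*} [MeasurableSpace X] {n : X → ℕ}
    (hn : Measurable n) {f : ℕ → X → ℝ} (hf : ∀ i, Measurable (f i)) :
    Measurable fun x => ∑ i ∈ range (n x), f i x := by
  have h : Measurable fun kx : ℕ × X => ∑ i ∈ range kx.1, f i kx.2 :=
    measurable_from_prod_countable_right fun k => Finset.measurable_sum (range k) fun i _ => hf i
  exact h.comp (hn.prodMk measurable_id)

theorem ProbabilityTheory.IndepFun.integral_comp_eq_integral_integral
    {Ω α β : Type*} [MeasurableSpace Ω] [MeasurableSpace α] [MeasurableSpace β]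
    {μ : Measure Ω} [IsFiniteMeasure μ] {X : Ω → α} {Y : Ω → β}
    (hXY : IndepFun X Y μ) (hX : Measurable X) (hY : Measurable Y) {f : α × β → ℝ}
    (hf : Measurable f) (hint : Integrable (fun ω => f (X ω, Y ω)) μ) :
    ∫ ω, f (X ω, Y ω) ∂μ = ∫ ω, ∫ ω', f (X ω, Y ω') ∂μ ∂μ := by
  have hmap := (indepFun_iff_map_prod_eq_prod_map_map hX.aemeasurable hY.aemeasurable).1 hXY
  have hint' : Integrable f ((μ.map X).prod (μ.map Y)) := by
    rw [← hmap, integrable_map_measure hf.aestronglyMeasurable (hX.prodMk hY).aemeasurable]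
    exact hint
  have hinner : ∀ x, ∫ y, f (x, y) ∂μ.map Y = ∫ ω', f (x, Y ω') ∂μ := fun x =>
    integral_map hY.aemeasurable (hf.comp measurable_prodMk_left).aestronglyMeasurable
  calc ∫ ω, f (X ω, Y ω) ∂μ = ∫ p, f p ∂(μ.map X).prod (μ.map Y) := by
        rw [← hmap, integral_map (hX.prodMk hY).aemeasurable hf.aestronglyMeasurable]
    _ = ∫ x, ∫ y, f (x, y) ∂μ.map Y ∂μ.map X := integral_prod f hint'
    _ = ∫ ω, ∫ ω', f (X ω, Y ω') ∂μ ∂μ := by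
        rw [integral_map hX.aemeasurable hint'.integral_prod_left.aestronglyMeasurable]
        simp only [hinner]

section WeightedSums

variable {Ω ι : Type*} [MeasurableSpace Ω] {μ : Measure Ω} {R : ι → Ω → ℝ} {X : Ω → ℝ}

theorem integral_sum_mul_eq_of_identDistrib (hid : ∀ i, IdentDistrib (R i) X μ μ)
    (hX : Integrable X μ) (s : Finset ι) (a : ι → ℝ) :
    ∫ ω, ∑ i ∈ s, a i * R i ω ∂μ = (∑ i ∈ s, a i) * ∫ ω, X ω ∂μ := by
  rw [integral_finsetSum s fun i _ => ((hid i).integrable_iff.2 hX).const_mul (a i),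
    Finset.sum_mul]
  exact Finset.sum_congr rfl fun i _ => by rw [integral_const_mul, (hid i).integral_eq]

theorem integral_mul_eq_of_identDistrib_of_pairwise_indepFun [IsFiniteMeasure μ]
    (hid : ∀ i, IdentDistrib (R i) X μ μ) (hind : Pairwise fun i j => IndepFun (R i) (R j) μ)
    [DecidableEq ι] (i j : ι) :
    ∫ ω, R i ω * R j ω ∂μ = if i = j then ∫ ω, X ω ^ 2 ∂μ else (∫ ω, X ω ∂μ) ^ 2 := by
  split_ifs with hij
  · subst hij
    simpa only [← sq, Function.comp_apply, id] using
      ((hid i).comp (measurable_id.pow_const 2)).integral_eq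
  · rw [(hind hij).integral_fun_mul_eq_mul_integral (hid i).aemeasurable_fst.aestronglyMeasurable
      (hid j).aemeasurable_fst.aestronglyMeasurable, (hid i).integral_eq, (hid j).integral_eq, sq]

theorem integral_sq_sum_mul_eq_of_identDistrib_of_pairwise_indepFun [IsFiniteMeasure μ]
    (hid : ∀ i, IdentDistrib (R i) X μ μ) (hind : Pairwise fun i j => IndepFun (R i) (R j) μ)
    (hX : MemLp X 2 μ) (s : Finset ι) (a : ι → ℝ) :
    ∫ ω, (∑ i ∈ s, a i * R i ω) ^ 2 ∂μ = (∑ i ∈ s, a i ^ 2) * ∫ ω, X ω ^ 2 ∂μ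
      + ((∑ i ∈ s, a i) ^ 2 - ∑ i ∈ s, a i ^ 2) * (∫ ω, X ω ∂μ) ^ 2 := by
  classical
  have hmem : ∀ i, MemLp (R i) 2 μ := fun i => (hid i).memLp_iff.2 hX
  have hint : ∀ i j, Integrable (fun ω => a i * a j * (R i ω * R j ω)) μ := fun i j =>
    ((hmem i).integrable_mul (hmem j)).const_mul _
  set q := ∫ ω, X ω ^ 2 ∂μ
  set m := ∫ ω, X ω ∂μ
  have hexpand : ∀ ω, (∑ i ∈ s, a i * R i ω) ^ 2
      = ∑ i ∈ s, ∑ j ∈ s, a i * a j * (R i ω * R j ω) := fun ω => by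
    rw [sq, Finset.sum_mul_sum]; simp only [mul_mul_mul_comm]
  calc ∫ ω, (∑ i ∈ s, a i * R i ω) ^ 2 ∂μ
      = ∑ i ∈ s, ∑ j ∈ s, a i * a j * (m ^ 2 + if i = j then q - m ^ 2 else 0) := by
        simp_rw [hexpand]
        rw [integral_finsetSum s fun i _ => integrable_finsetSum s fun j _ => hint i j]
        refine Finset.sum_congr rfl fun i _ => ?_
        rw [integral_finsetSum s fun j _ => hint i j]
        refine Finset.sum_congr rfl fun j _ => ?_
        rw [integral_const_mul, integral_mul_eq_of_identDistrib_of_pairwise_indepFun hid hind]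
        split_ifs <;> ring
    _ = _ := by
        simp only [mul_add, mul_ite, mul_zero, Finset.sum_add_distrib, Finset.sum_ite_eq]
        have h1 : ∑ i ∈ s, ∑ j ∈ s, a i * a j * m ^ 2 = (∑ i ∈ s, a i) ^ 2 * m ^ 2 := by
          simp_rw [sq (∑ i ∈ s, a i), Finset.sum_mul_sum, Finset.sum_mul]
        have h2 : ∑ i ∈ s, a i * a i * (q - m ^ 2) = (∑ i ∈ s, a i ^ 2) * (q - m ^ 2) := by
          simp_rw [Finset.sum_mul, sq]
        rw [Finset.sum_ite_mem, Finset.inter_self, h1, h2]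
        ring

theorem integral_sum_mul_add_const_eq [IsProbabilityMeasure μ]
    (hid : ∀ i, IdentDistrib (R i) X μ μ) (hX : Integrable X μ) (s : Finset ι) (a : ι → ℝ)
    (b : ℝ) :
    ∫ ω, (∑ i ∈ s, a i * R i ω + b) ∂μ = (∑ i ∈ s, a i) * ∫ ω, X ω ∂μ + b := by
  rw [integral_add (integrable_finsetSum s fun i _ => ((hid i).integrable_iff.2 hX).const_mul _)
    (integrable_const b), integral_sum_mul_eq_of_identDistrib hid hX, integral_const, smul_eq_mul,
    probReal_univ, one_mul]

theorem integral_sq_sum_mul_add_const_eq [IsProbabilityMeasure μ]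
    (hid : ∀ i, IdentDistrib (R i) X μ μ) (hind : Pairwise fun i j => IndepFun (R i) (R j) μ)
    (hX : MemLp X 2 μ) (s : Finset ι) (a : ι → ℝ) (b : ℝ) :
    ∫ ω, (∑ i ∈ s, a i * R i ω + b) ^ 2 ∂μ = (∑ i ∈ s, a i ^ 2) * ∫ ω, X ω ^ 2 ∂μ
      + ((∑ i ∈ s, a i) ^ 2 - ∑ i ∈ s, a i ^ 2) * (∫ ω, X ω ∂μ) ^ 2
      + 2 * b * (∑ i ∈ s, a i) * (∫ ω, X ω ∂μ) + b ^ 2 := by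
  have hS : MemLp (fun ω => ∑ i ∈ s, a i * R i ω) 2 μ :=
    memLp_finsetSum s fun i _ => ((hid i).memLp_iff.2 hX).const_mul (a i)
  have hexpand : ∀ ω, (∑ i ∈ s, a i * R i ω + b) ^ 2
      = (∑ i ∈ s, a i * R i ω) ^ 2 + (2 * b * ∑ i ∈ s, a i * R i ω + b ^ 2) := fun ω => by ring
  have hlin : Integrable (fun ω => 2 * b * ∑ i ∈ s, a i * R i ω) μ :=
    (hS.integrable one_le_two).const_mul _
  simp_rw [hexpand]
  rw [integral_add hS.integrable_sq (hlin.fun_add (integrable_const _)),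
    integral_add hlin (integrable_const _), integral_const_mul, integral_const, smul_eq_mul,
    probReal_univ, one_mul, integral_sq_sum_mul_eq_of_identDistrib_of_pairwise_indepFun hid hind hX,
    integral_sum_mul_eq_of_identDistrib hid (hX.integrable one_le_two)]
  ring

end WeightedSums

section FixedPoint

variable {Ω : Type*} [MeasurableSpace Ω] {μ : Measure Ω}
  {N : Ω → ℕ} {C : ℕ → Ω → ℝ} {Z : Ω → ℝ} {R : ℕ → Ω → ℝ} {c : ℝ}

theorem abs_sum_mul_le_sum_of_nonneg {ι : Type*} {s : Finset ι} {a x : ι → ℝ}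
    (ha : ∀ i, 0 ≤ a i) (hx : ∀ i, |x i| ≤ 1) : |∑ i ∈ s, a i * x i| ≤ ∑ i ∈ s, a i :=
  (Finset.abs_sum_le_sum_abs _ _).trans <| Finset.sum_le_sum fun i _ => by
    rw [abs_mul, abs_of_nonneg (ha i)]
    exact mul_le_of_le_one_right (ha i) (hx i)

theorem memLp_sum_range_mul_add [IsFiniteMeasure μ] {p : ENNReal}
    (hNmeas : Measurable N) (hCmeas : ∀ i, Measurable (C i)) (hRmeas : ∀ i, Measurable (R i))
    (hCpos : ∀ i ω, 0 ≤ C i ω) (hCsum : ∀ ω, ∑ i ∈ range (N ω), C i ω = c)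
    (hRbd : ∀ i ω, |R i ω| ≤ 1) (hZ : MemLp Z p μ) (d : ℝ) :
    MemLp (fun ω => ∑ i ∈ range (N ω), C i ω * R i ω + d * Z ω) p μ := by
  have hS : MemLp (fun ω => ∑ i ∈ range (N ω), C i ω * R i ω) p μ :=
    MemLp.of_bound (hNmeas.sum_range fun i =>
        (hCmeas i).mul (hRmeas i)).aestronglyMeasurable c
      (Filter.Eventually.of_forall fun ω => by
        rw [Real.norm_eq_abs, ← hCsum ω]
        exact abs_sum_mul_le_sum_of_nonneg (fun i => hCpos i ω) fun i => hRbd i ω)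
  exact hS.add (hZ.const_mul d)

theorem integral_comp_sum_range_mul_add_eq [IsFiniteMeasure μ]
    (hNmeas : Measurable N) (hCmeas : ∀ i, Measurable (C i)) (hZmeas : Measurable Z)
    (hRmeas : ∀ i, Measurable (R i))
    (hindep : IndepFun (fun ω i => R i ω) (fun ω => (N ω, Z ω, fun i => C i ω)) μ)
    (d : ℝ) {g : ℝ → ℝ} (hg : Measurable g)
    (hint : Integrable (fun ω => g (∑ i ∈ range (N ω), C i ω * R i ω + d * Z ω)) μ) :
    ∫ ω, g (∑ i ∈ range (N ω), C i ω * R i ω + d * Z ω) ∂μ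
      = ∫ ω, ∫ ω', g (∑ i ∈ range (N ω), C i ω * R i ω' + d * Z ω) ∂μ ∂μ := by
  have hf : Measurable fun p : (ℕ × ℝ × (ℕ → ℝ)) × (ℕ → ℝ) =>
      g (∑ i ∈ range p.1.1, p.1.2.2 i * p.2 i + d * p.1.2.1) :=
    hg.comp <| (measurable_fst.fst.sum_range fun i =>
      ((measurable_pi_apply i).comp measurable_fst.snd.snd).mul
        ((measurable_pi_apply i).comp measurable_snd)).add
      (measurable_const.mul measurable_fst.snd.fst)
  exact hindep.symm.integral_comp_eq_integral_integral
    (hNmeas.prodMk (hZmeas.prodMk (measurable_pi_lambda _ hCmeas)))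
    (measurable_pi_lambda _ hRmeas) hf hint

theorem memLp_of_abs_le_one [IsFiniteMeasure μ] {X : Ω → ℝ} {p : ENNReal} (hX : Measurable X)
    (hbd : ∀ ω, |X ω| ≤ 1) : MemLp X p μ :=
  MemLp.of_bound hX.aestronglyMeasurable 1 (Filter.Eventually.of_forall hbd)

theorem integral_sum_range_mul_add_eq [IsProbabilityMeasure μ]
    (hNmeas : Measurable N) (hCmeas : ∀ i, Measurable (C i)) (hZmeas : Measurable Z)
    (hRmeas : ∀ i, Measurable (R i))
    (hindep : IndepFun (fun ω i => R i ω) (fun ω => (N ω, Z ω, fun i => C i ω)) μ)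
    (hCpos : ∀ i ω, 0 ≤ C i ω) (hCsum : ∀ ω, ∑ i ∈ range (N ω), C i ω = c)
    (hRbd : ∀ i ω, |R i ω| ≤ 1) (hid : ∀ i, IdentDistrib (R i) (R 0) μ μ)
    (hZ : Integrable Z μ) (d : ℝ) :
    ∫ ω, (∑ i ∈ range (N ω), C i ω * R i ω + d * Z ω) ∂μ
      = c * ∫ ω, R 0 ω ∂μ + d * ∫ ω, Z ω ∂μ := by
  have hT := memLp_sum_range_mul_add hNmeas hCmeas hRmeas hCpos hCsum hRbd
    (memLp_one_iff_integrable.2 hZ) d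
  rw [integral_comp_sum_range_mul_add_eq (g := fun x => x) hNmeas hCmeas hZmeas hRmeas hindep d
    measurable_id (hT.integrable le_rfl)]
  simp_rw [integral_sum_mul_add_const_eq hid
    (memLp_of_abs_le_one (hRmeas 0) (hRbd 0) |>.integrable le_rfl), hCsum]
  rw [integral_add (integrable_const _) (hZ.const_mul d), integral_const, integral_const_mul,
    smul_eq_mul, probReal_univ, one_mul]

theorem integral_sq_sum_range_mul_add_eq [IsProbabilityMeasure μ]
    (hNmeas : Measurable N) (hCmeas : ∀ i, Measurable (C i)) (hZmeas : Measurable Z)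
    (hRmeas : ∀ i, Measurable (R i))
    (hindep : IndepFun (fun ω i => R i ω) (fun ω => (N ω, Z ω, fun i => C i ω)) μ)
    (hCpos : ∀ i ω, 0 ≤ C i ω) (hCsum : ∀ ω, ∑ i ∈ range (N ω), C i ω = c)
    (hRbd : ∀ i ω, |R i ω| ≤ 1) (hid : ∀ i, IdentDistrib (R i) (R 0) μ μ)
    (hpair : Pairwise fun i j => IndepFun (R i) (R j) μ) (hZ : MemLp Z 2 μ) (d : ℝ) :
    ∫ ω, (∑ i ∈ range (N ω), C i ω * R i ω + d * Z ω) ^ 2 ∂μ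
      = (∫ ω, ∑ i ∈ range (N ω), C i ω ^ 2 ∂μ) * (∫ ω, R 0 ω ^ 2 ∂μ - (∫ ω, R 0 ω ∂μ) ^ 2)
        + 2 * d * c * (∫ ω, R 0 ω ∂μ) * (∫ ω, Z ω ∂μ) + d ^ 2 * ∫ ω, Z ω ^ 2 ∂μ
        + c ^ 2 * (∫ ω, R 0 ω ∂μ) ^ 2 := by
  set q := ∫ ω, R 0 ω ^ 2 ∂μ with hq
  set m := ∫ ω, R 0 ω ∂μ with hm
  have hT := memLp_sum_range_mul_add hNmeas hCmeas hRmeas hCpos hCsum hRbd hZ d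
  have hsq : Integrable (fun ω => ∑ i ∈ range (N ω), C i ω ^ 2) μ :=
    Integrable.of_bound (hNmeas.sum_range fun i =>
      (hCmeas i).pow_const 2).aestronglyMeasurable (c ^ 2) (Filter.Eventually.of_forall fun ω => by
        rw [Real.norm_eq_abs, abs_of_nonneg (Finset.sum_nonneg fun i _ => sq_nonneg _),
          ← hCsum ω]
        exact Finset.sum_sq_le_sq_sum_of_nonneg fun i _ => hCpos i ω)
  rw [integral_comp_sum_range_mul_add_eq (g := fun x => x ^ 2) hNmeas hCmeas hZmeas hRmeas
    hindep d (measurable_id.pow_const 2) hT.integrable_sq]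
  simp_rw [integral_sq_sum_mul_add_const_eq hid hpair
    (memLp_of_abs_le_one (hRmeas 0) (hRbd 0)), hCsum, ← hq, ← hm]
  have hexpand : ∀ ω, (∑ i ∈ range (N ω), C i ω ^ 2) * q
      + (c ^ 2 - ∑ i ∈ range (N ω), C i ω ^ 2) * m ^ 2 + 2 * (d * Z ω) * c * m + (d * Z ω) ^ 2
      = (q - m ^ 2) * ∑ i ∈ range (N ω), C i ω ^ 2 + 2 * d * c * m * Z ω + d ^ 2 * Z ω ^ 2
        + c ^ 2 * m ^ 2 := fun ω => by ring
  simp_rw [hexpand]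
  have hA : Integrable (fun ω => (q - m ^ 2) * ∑ i ∈ range (N ω), C i ω ^ 2) μ :=
    hsq.const_mul _
  rw [integral_add ((hA.fun_add ((hZ.integrable one_le_two).const_mul _)).fun_add
      (hZ.integrable_sq.const_mul _)) (integrable_const _),
    integral_add (hA.fun_add ((hZ.integrable one_le_two).const_mul _))
      (hZ.integrable_sq.const_mul _),
    integral_add hA ((hZ.integrable one_le_two).const_mul _),
    integral_const_mul, integral_const_mul, integral_const_mul, integral_const, smul_eq_mul,
    probReal_univ, one_mul]
  ring

end FixedPoint

theorem stmt13_general {Ω : Type*} [MeasurableSpace Ω] (μ : Measure Ω) [IsProbabilityMeasure μ]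
    (c d : ℝ) (hd : 0 < d) (hcd : c + d = 1)
    (N : Ω → ℕ) (C : ℕ → Ω → ℝ) (Z : Ω → ℝ) (R : ℕ → Ω → ℝ)
    (hNmeas : Measurable N) (hCmeas : ∀ i, Measurable (C i))
    (hZmeas : Measurable Z) (hRmeas : ∀ i, Measurable (R i))
    (hCpos : ∀ i ω, 0 ≤ C i ω)
    (hCsum : ∀ ω, ∑ i ∈ Finset.range (N ω), C i ω = c)
    (hZbd : ∀ ω, Z ω ∈ Set.Icc (-1 : ℝ) 1)
    (hRbd : ∀ i ω, R i ω ∈ Set.Icc (-1 : ℝ) 1)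
    (hident : ∀ i, Measure.map (R i) μ = Measure.map (R 0) μ)
    (hindep : iIndepFun R μ)
    (hindep2 : IndepFun (fun ω i => R i ω) (fun ω => (N ω, Z ω, fun i => C i ω)) μ)
    (hfix : Measure.map (fun ω => ∑ i ∈ Finset.range (N ω), C i ω * R i ω + d * Z ω) μ
      = Measure.map (R 0) μ)
    (ρ₂ : ℝ) (hρ₂def : ρ₂ = ∫ ω, ∑ i ∈ Finset.range (N ω), (C i ω) ^ 2 ∂μ)
    (hρ₂lt : ρ₂ < 1) :
    (∫ ω, R 0 ω ∂μ = ∫ ω, Z ω ∂μ) ∧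
    variance (R 0) μ = d ^ 2 * variance Z μ / (1 - ρ₂) := by
  have hRabs : ∀ i ω, |R i ω| ≤ 1 := fun i ω => abs_le.2 (hRbd i ω)
  have hZ : MemLp Z 2 μ := memLp_of_abs_le_one hZmeas fun ω => abs_le.2 (hZbd ω)
  have hid : ∀ i, IdentDistrib (R i) (R 0) μ μ :=
    fun i => ⟨(hRmeas i).aemeasurable, (hRmeas 0).aemeasurable, hident i⟩
  have hT : IdentDistrib (fun ω => ∑ i ∈ range (N ω), C i ω * R i ω + d * Z ω) (R 0) μ μ :=
    ⟨(memLp_sum_range_mul_add hNmeas hCmeas hRmeas hCpos hCsum hRabs hZ d).aestronglyMeasurable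
      |>.aemeasurable, (hRmeas 0).aemeasurable, hfix⟩
  have hmean := hT.integral_eq.symm.trans <| integral_sum_range_mul_add_eq hNmeas hCmeas hZmeas
    hRmeas hindep2 hCpos hCsum hRabs hid (hZ.integrable one_le_two) d
  have hsecond := ((hT.comp (measurable_id.pow_const 2)).integral_eq).symm.trans <|
    integral_sq_sum_range_mul_add_eq hNmeas hCmeas hZmeas hRmeas hindep2 hCpos hCsum hRabs hid
      (fun i j hij => hindep.indepFun hij) hZ d
  have hmZ : ∫ ω, R 0 ω ∂μ = ∫ ω, Z ω ∂μ :=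
    mul_left_cancel₀ hd.ne' (by linear_combination hmean + (∫ ω, R 0 ω ∂μ) * hcd)
  refine ⟨hmZ, ?_⟩
  rw [variance_eq_sub (memLp_of_abs_le_one (hRmeas 0) (hRabs 0)), variance_eq_sub hZ,
    eq_div_iff (sub_ne_zero.2 hρ₂lt.ne')]
  simp only [Function.comp_def, id, Pi.pow_apply] at hsecond ⊢
  rw [← hρ₂def, ← hmZ] at hsecond
  rw [← hmZ]
  linear_combination hsecond + (∫ ω, R 0 ω ∂μ) ^ 2 * (c + d + 1) * hcd

/-- For a [-1,1]-valued solution of the distributional fixed-point equation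
R =_d Σ_{i=1}^N C_i R_i + dZ with Σ C_i = c, N ≥ 1, c+d = 1, d > 0, the R_i i.i.d.
copies of R independent of (N,Z,C) and Z independent of (N,C):
E[R] = E[Z] and Var(R) = d² Var(Z)/(1-ρ₂) with ρ₂ = E[Σ C_i²] < 1. -/
theorem stmt13 {Ω : Type*} [MeasurableSpace Ω] (μ : Measure Ω) [IsProbabilityMeasure μ]
    (c d : ℝ) (hd : 0 < d) (hcd : c + d = 1)
    (N : Ω → ℕ) (C : ℕ → Ω → ℝ) (Z : Ω → ℝ) (R : ℕ → Ω → ℝ)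
    (hNmeas : Measurable N) (hCmeas : ∀ i, Measurable (C i))
    (hZmeas : Measurable Z) (hRmeas : ∀ i, Measurable (R i))
    (hN1 : ∀ ω, 1 ≤ N ω) (hCpos : ∀ i ω, 0 ≤ C i ω)
    (hCsum : ∀ ω, ∑ i ∈ Finset.range (N ω), C i ω = c)
    (hZbd : ∀ ω, Z ω ∈ Set.Icc (-1 : ℝ) 1)
    (hRbd : ∀ i ω, R i ω ∈ Set.Icc (-1 : ℝ) 1)
    (hident : ∀ i, Measure.map (R i) μ = Measure.map (R 0) μ)
    (hindep : iIndepFun R μ)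
    (hindep2 : IndepFun (fun ω i => R i ω) (fun ω => (N ω, Z ω, fun i => C i ω)) μ)
    (hZindep : IndepFun Z (fun ω => (N ω, fun i => C i ω)) μ)
    (hfix : Measure.map (fun ω => ∑ i ∈ Finset.range (N ω), C i ω * R i ω + d * Z ω) μ
      = Measure.map (R 0) μ)
    (ρ₂ : ℝ) (hρ₂def : ρ₂ = ∫ ω, ∑ i ∈ Finset.range (N ω), (C i ω) ^ 2 ∂μ)
    (hρ₂lt : ρ₂ < 1) :
    (∫ ω, R 0 ω ∂μ = ∫ ω, Z ω ∂μ) ∧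
    variance (R 0) μ = d ^ 2 * variance Z μ / (1 - ρ₂) :=
  stmt13_general μ c d hd hcd N C Z R hNmeas hCmeas hZmeas hRmeas hCpos hCsum hZbd hRbd hident
    hindep hindep2 hfix ρ₂ hρ₂def hρ₂lt
end

section
/- Let X_k = Σ_{s=1}^{k-T} Σ_{l=1}^s a_{l+T,s+T} ρ₁^{l-1} · 1(T < k), where a_{l,s} = C(s,l)(1-c-d)^{s-l}, T ≥ 0 is a fixed integer, ρ₁ ∈ [0, c+d), and c+d ∈ (0,1). Then (X_k)_{k ≥ T+1} is nonnegative and monotone increasing in k, and lim_{k→∞} X_k = 1/((c+d)^{T+2}(1 - ρ₁/(c+d))). -/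
/-!
Reindexing by `i = l - 1`, `j = s - l` turns `X_k` into the sum of
`f (i, j) = C(j + i + T + 1, i + T + 1) (1 - c - d)^j ρ₁^i` over the triangle `i + j < k - T`.
These triangles exhaust `ℕ × ℕ` monotonically and `f ≥ 0`, so everything follows from
`∑ f = 1 / ((c + d)^(T+2) (1 - ρ₁/(c + d)))`: summing over `j` first is the negative binomial
series `∑_j C(j + m, m) q^j = (1 - q)^(-(m+1))`, and the remaining sum over `i` is geometric
with ratio `ρ₁ / (c + d) < 1`.
-/

open Filter Finset

def triangle (N : ℕ) : Finset (ℕ × ℕ) := {x ∈ range N ×ˢ range N | x.1 + x.2 < N}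

@[simp]
lemma mem_triangle {N : ℕ} {x : ℕ × ℕ} : x ∈ triangle N ↔ x.1 + x.2 < N := by
  simp only [triangle, mem_filter, mem_product, mem_range]
  omega

lemma triangle_mono : Monotone triangle := fun _ _ hle x hx => by
  rw [mem_triangle] at *
  omega

lemma tendsto_triangle_atTop : Tendsto triangle atTop atTop :=
  tendsto_atTop_finset_of_monotone triangle_mono fun x => ⟨x.1 + x.2 + 1, by simp⟩

lemma sum_Icc_sum_Icc_eq_sum_triangle {M : Type*} [AddCommMonoid M] (g : ℕ → ℕ → M) (N : ℕ) :
    ∑ s ∈ Icc 1 N, ∑ l ∈ Icc 1 s, g s l =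
      ∑ x ∈ triangle N, g (x.1 + x.2 + 1) (x.1 + 1) := by
  rw [sum_sigma']
  refine sum_bij' (fun a _ => (a.2 - 1, a.1 - a.2)) (fun x _ => ⟨x.1 + x.2 + 1, x.1 + 1⟩)
    ?_ ?_ ?_ ?_ ?_
  all_goals
    simp only [mem_sigma, mem_Icc, mem_triangle, Sigma.forall, Prod.forall, Sigma.mk.injEq,
      Prod.mk.injEq, heq_eq_eq]
  · omega
  · omega
  · intro s l _
    constructor <;> omega
  · omega
  · intro s l _
    congr <;> omega

lemma hasSum_prod_of_nonneg {α β : Type*} {f : α × β → ℝ} (hf : 0 ≤ f) {g : α → ℝ} {a : ℝ}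
    (hfiber : ∀ x, HasSum (fun y => f (x, y)) (g x)) (hg : HasSum g a) : HasSum f a := by
  have hsummable : Summable f := by
    rw [summable_prod_of_nonneg hf]
    exact ⟨fun x => (hfiber x).summable, hg.summable.congr fun x => ((hfiber x).tsum_eq).symm⟩
  rw [← (hsummable.hasSum.prod_fiberwise hfiber).unique hg]
  exact hsummable.hasSum

lemma hasSum_choose_mul_pow_mul_pow {p ρ : ℝ} (hp : p ≤ 1) (hρ0 : 0 ≤ ρ) (hρp : ρ < p) (T : ℕ) :
    HasSum (fun x : ℕ × ℕ =>
        ((x.2 + (x.1 + T + 1)).choose (x.1 + T + 1) : ℝ) * (1 - p) ^ x.2 * ρ ^ x.1)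
      (1 / (p ^ (T + 2) * (1 - ρ / p))) := by
  have hp0 : 0 < p := hρ0.trans_lt hρp
  have hq0 : 0 ≤ 1 - p := by linarith
  have hq : ‖1 - p‖ < 1 := by
    rw [Real.norm_eq_abs, abs_lt]
    constructor <;> linarith
  refine hasSum_prod_of_nonneg (fun x => by positivity)
    (fun i => (hasSum_choose_mul_geometric_of_norm_lt_one (i + T + 1) hq).mul_right (ρ ^ i)) ?_
  have hgeom := (hasSum_geometric_of_lt_one (div_nonneg hρ0 hp0.le)
    ((div_lt_one hp0).2 hρp)).mul_left (1 / p ^ (T + 2))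
  rw [show 1 / (p ^ (T + 2) * (1 - ρ / p)) = 1 / p ^ (T + 2) * (1 - ρ / p)⁻¹ by field_simp]
  refine hgeom.congr_fun fun i => ?_
  rw [sub_sub_cancel, div_pow, show i + T + 1 + 1 = T + 2 + i by ring, pow_add]
  field_simp

theorem stmt19_general (c d ρ₁ : ℝ) (hcd : c + d < 1)
    (hρ0 : 0 ≤ ρ₁) (hρ : ρ₁ < c + d) (T : ℕ)
    (X : ℕ → ℝ)
    (hX : ∀ k, X k = if T < k then
        ∑ s ∈ Finset.Icc 1 (k - T), ∑ l ∈ Finset.Icc 1 s,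
          ((s + T).choose (s - l) : ℝ) * (1 - c - d) ^ (s - l) * ρ₁ ^ (l - 1)
      else 0) :
    (∀ k, 0 ≤ X k) ∧ Monotone X ∧
    Filter.Tendsto X Filter.atTop
      (nhds (1 / ((c + d) ^ (T + 2) * (1 - ρ₁ / (c + d))))) := by
  set f : ℕ × ℕ → ℝ := fun x =>
    ((x.2 + (x.1 + T + 1)).choose (x.1 + T + 1) : ℝ) * (1 - (c + d)) ^ x.2 * ρ₁ ^ x.1
  have hf : 0 ≤ f := fun x => by
    have : 0 ≤ 1 - (c + d) := by linarith
    positivity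
  have hXf : X = fun k => ∑ x ∈ triangle (k - T), f x := by
    ext k
    rw [hX]
    split_ifs with hk
    · rw [sum_Icc_sum_Icc_eq_sum_triangle]
      refine sum_congr rfl fun x _ => ?_
      rw [show x.1 + x.2 + 1 - (x.1 + 1) = x.2 by omega, Nat.add_sub_cancel,
        show x.1 + x.2 + 1 + T = x.2 + (x.1 + T + 1) by ring, Nat.choose_symm_add, sub_sub]
    · simp [Nat.sub_eq_zero_of_le (not_lt.1 hk), triangle]
  rw [hXf]
  refine ⟨fun k => sum_nonneg fun x _ => hf x, fun a b hab => ?_, ?_⟩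
  · exact sum_le_sum_of_subset_of_nonneg (triangle_mono (Nat.sub_le_sub_right hab T))
      fun x _ _ => hf x
  · exact ((hasSum_choose_mul_pow_mul_pow hcd.le hρ0 hρ T).comp tendsto_triangle_atTop).comp
      (tendsto_sub_atTop_nat T)

/-- X_k = Σ_{s=1}^{k-T} Σ_{l=1}^s a_{l+T,s+T} ρ₁^{l-1} 1(T < k), with
a_{l+T,s+T} = C(s+T,s-l)(1-c-d)^{s-l}, is nonnegative, monotone increasing, and
converges to 1/((c+d)^{T+2}(1-ρ₁/(c+d))). -/
theorem stmt19 (c d ρ₁ : ℝ) (hc : 0 < c) (hd : 0 < d) (hcd : c + d < 1)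
    (hρ0 : 0 ≤ ρ₁) (hρ : ρ₁ < c + d) (T : ℕ)
    (X : ℕ → ℝ)
    (hX : ∀ k, X k = if T < k then
        ∑ s ∈ Finset.Icc 1 (k - T), ∑ l ∈ Finset.Icc 1 s,
          ((s + T).choose (s - l) : ℝ) * (1 - c - d) ^ (s - l) * ρ₁ ^ (l - 1)
      else 0) :
    (∀ k, 0 ≤ X k) ∧ Monotone X ∧
    Filter.Tendsto X Filter.atTop
      (nhds (1 / ((c + d) ^ (T + 2) * (1 - ρ₁ / (c + d))))) :=
  stmt19_general c d ρ₁ hcd hρ0 hρ T X hX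
end
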